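/- Let f : X → Y be a perfect (continuous, closed, with compact fibers) surjective map of Hausdorff topological spaces, and suppose w(Y) ≤ |Y|. Then w(X) ≤ |X|. -/

import Mathlib

open TopologicalSpace Cardinal

/-- The weight of a topological space: the minimal cardinality of a basis. -/
noncomputable def weight (X : Type*) [TopologicalSpace X] : Cardinal :=
  ⨅ B : {B : Set (Set X) // IsTopologicalBasis B}, Cardinal.mk B.1

/-!
Following Arhangel'skii, coarsen the topology of `X` to a Hausdorff topology generated by one
pair of disjoint open sets for each pair of distinct points; it has weight at most `|X|`, so the
identity is a continuous injection `h` of `X` onto a Hausdorff space `Z` with `w(Z) ≤ |X|`.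
Since `f` is perfect and `h` is injective, `x ↦ (f x, h x)` is a perfect injection into the
Hausdorff space `Y × Z`, hence an embedding, and `w(X) ≤ w(Y) · w(Z) ≤ |Y| · |X| ≤ |X|`.
-/

universe u v w

section Weight

variable {X : Type u} {Y : Type v} {Z : Type w}
  [TopologicalSpace X] [TopologicalSpace Y] [TopologicalSpace Z]

theorem weight_le_mk_of_isTopologicalBasis {B : Set (Set X)} (hB : IsTopologicalBasis B) :
    weight X ≤ #B :=
  ciInf_le' _ (⟨B, hB⟩ : {B : Set (Set X) // IsTopologicalBasis B})

variable (X) in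
theorem exists_isTopologicalBasis_mk_eq_weight :
    ∃ B : Set (Set X), IsTopologicalBasis B ∧ #B = weight X := by
  have : Nonempty {B : Set (Set X) // IsTopologicalBasis B} := ⟨⟨_, isTopologicalBasis_opens⟩⟩
  obtain ⟨B, hB⟩ := ciInf_mem fun B : {B : Set (Set X) // IsTopologicalBasis B} => #B.1
  exact ⟨B.1, B.2, hB⟩

theorem weight_le_mk_of_discreteTopology [DiscreteTopology X] : weight X ≤ #X := by
  have hrange : {s : Set X | ∃ x, s = {x}} = Set.range ({·}) := by
    ext s
    simp [eq_comm]
  have := weight_le_mk_of_isTopologicalBasis (isTopologicalBasis_singletons X)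
  rw [hrange] at this
  exact this.trans mk_range_le

theorem weight_le_of_isInducing {g : X → Y} (hg : Topology.IsInducing g) :
    lift.{v} (weight X) ≤ lift.{u} (weight Y) := by
  obtain ⟨B, hB, hBw⟩ := exists_isTopologicalBasis_mk_eq_weight Y
  rw [← hBw]
  exact (lift_le.2 (weight_le_mk_of_isTopologicalBasis (hB.isInducing hg))).trans
    mk_image_le_lift

theorem weight_prod_le : weight (Y × Z) ≤ lift.{w} (weight Y) * lift.{v} (weight Z) := by
  obtain ⟨BY, hBY, hBYw⟩ := exists_isTopologicalBasis_mk_eq_weight Y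
  obtain ⟨BZ, hBZ, hBZw⟩ := exists_isTopologicalBasis_mk_eq_weight Z
  rw [← hBYw, ← hBZw]
  refine (weight_le_mk_of_isTopologicalBasis (hBY.prod hBZ)).trans ?_
  rw [← mk_prod, ← mk_congr (Equiv.Set.prod BY BZ), ← Set.image_uncurry_prod]
  exact mk_image_le

end Weight

theorem weight_generateFrom_le {X : Type u} (S : Set (Set X)) :
    @weight X (generateFrom S) ≤ max ℵ₀ #S := by
  let _ := generateFrom S
  have hfinite : {F : Set (Set X) | F.Finite ∧ F ⊆ S} ⊆
      Set.range fun F : Finset S => Subtype.val '' (F : Set S) := by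
    rintro F ⟨hF, hFS⟩
    lift F to Set S using hFS
    exact ⟨(hF.of_finite_image Subtype.val_injective.injOn).toFinset, by simp⟩
  calc weight X ≤ #((⋂₀ ·) '' {F : Set (Set X) | F.Finite ∧ F ⊆ S}) :=
        weight_le_mk_of_isTopologicalBasis (isTopologicalBasis_of_subbasis rfl)
    _ ≤ #{F : Set (Set X) | F.Finite ∧ F ⊆ S} := mk_image_le
    _ ≤ #(Finset S) := (mk_le_mk_of_subset hfinite).trans mk_range_le
    _ ≤ #(List S) := mk_le_of_surjective List.toFinset_surjective
    _ ≤ max ℵ₀ #S := mk_list_le_max S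

theorem exists_t2Space_generateFrom_mk_le (X : Type u) [TopologicalSpace X] [T2Space X] :
    ∃ S : Set (Set X), (∀ s ∈ S, IsOpen s) ∧ #S ≤ max ℵ₀ #X ∧ @T2Space X (generateFrom S) := by
  choose U V hU hV hxU hyV hUV using fun p : {p : X × X // p.1 ≠ p.2} => t2_separation p.2
  refine ⟨Set.range U ∪ Set.range V, ?_, ?_, @T2Space.mk _ (generateFrom _) fun x y hxy => ?_⟩
  · rintro s (⟨p, rfl⟩ | ⟨p, rfl⟩)
    exacts [hU p, hV p]
  · have hκ : ℵ₀ ≤ max ℵ₀ #X := le_max_left _ _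
    have hpairs : #{p : X × X // p.1 ≠ p.2} ≤ max ℵ₀ #X := by
      refine (mk_subtype_le _).trans ?_
      rw [mk_prod, lift_id, ← mul_eq_self hκ]
      exact mul_le_mul' (le_max_right _ _) (le_max_right _ _)
    calc #↥(Set.range U ∪ Set.range V)
        ≤ #{p : X × X // p.1 ≠ p.2} + #{p : X × X // p.1 ≠ p.2} :=
          (mk_union_le _ _).trans (add_le_add mk_range_le mk_range_le)
      _ ≤ max ℵ₀ #X := (add_le_add hpairs hpairs).trans (add_eq_self hκ).le
  · exact ⟨U ⟨(x, y), hxy⟩, V ⟨(x, y), hxy⟩,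
      isOpen_generateFrom_of_mem (Or.inl ⟨_, rfl⟩), isOpen_generateFrom_of_mem (Or.inr ⟨_, rfl⟩),
      hxU _, hyV _, hUV _⟩

theorem exists_continuous_injective_weight_le (X : Type u) [TopologicalSpace X] [T2Space X] :
    ∃ (Z : Type u) (_ : TopologicalSpace Z), T2Space Z ∧ weight Z ≤ max ℵ₀ #X ∧
      ∃ h : X → Z, Continuous h ∧ Function.Injective h := by
  obtain ⟨S, hSopen, hS, hT2⟩ := exists_t2Space_generateFrom_mk_le X
  refine ⟨X, generateFrom S, hT2, (weight_generateFrom_le S).trans ?_, id,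
    continuous_id_iff_le.2 (le_generateFrom hSopen), Function.injective_id⟩
  exact max_le (le_max_left _ _) hS

theorem isClosedEmbedding_prodMk_of_isProperMap {X : Type u} {Y : Type v} {Z : Type w}
    [TopologicalSpace X] [TopologicalSpace Y] [TopologicalSpace Z] [T2Space Y] [T2Space Z]
    {f : X → Y} (hf : IsProperMap f) {h : X → Z} (hh : Continuous h)
    (hinj : Function.Injective h) : Topology.IsClosedEmbedding fun x => (f x, h x) := by
  have hproper : IsProperMap fun x => (f x, h x) :=
    isProperMap_of_comp_of_t2 (hf.continuous.prodMk hh) continuous_fst hf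
  exact .of_continuous_injective_isClosedMap hproper.continuous
    (fun _ _ hxy => hinj (congrArg Prod.snd hxy)) hproper.isClosedMap

theorem weight_le_of_isProperMap_of_injective {X Z : Type u} {Y : Type v}
    [TopologicalSpace X] [TopologicalSpace Y] [TopologicalSpace Z] [T2Space Y] [T2Space Z]
    {f : X → Y} (hf : IsProperMap f) {h : X → Z} (hh : Continuous h)
    (hinj : Function.Injective h) :
    lift.{v} (weight X) ≤ lift.{u} (weight Y) * lift.{v} (weight Z) := by
  have := weight_le_of_isInducing (isClosedEmbedding_prodMk_of_isProperMap hf hh hinj).isInducing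
  rw [lift_id'.{u, v} (weight (Y × Z)), lift_umax] at this
  exact this.trans weight_prod_le

theorem weight_le_mk_of_perfect_preimage {X Y : Type*} [TopologicalSpace X]
    [TopologicalSpace Y] [T2Space X] [T2Space Y] (f : X → Y)
    (hcont : Continuous f) (hclosed : IsClosedMap f)
    (hfib : ∀ y : Y, IsCompact (f ⁻¹' {y})) (hsurj : Function.Surjective f)
    (hY : weight Y ≤ Cardinal.mk Y) : weight X ≤ Cardinal.mk X := by
  cases finite_or_infinite X with
  | inl _ => exact weight_le_mk_of_discreteTopology
  | inr _ =>
    have hf : IsProperMap f :=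
      isProperMap_iff_isClosedMap_and_compact_fibers.2 ⟨hcont, hclosed, hfib⟩
    obtain ⟨Z, _, _, hZ, h, hh, hinj⟩ := exists_continuous_injective_weight_le X
    have hYX : lift.{u_1} #Y ≤ lift.{u_2} #X := lift_mk_le'.2 ⟨.ofSurjective f hsurj⟩
    have hX : ℵ₀ ≤ #X := aleph0_le_mk X
    rw [← lift_le.{u_2}]
    calc lift.{u_2} (weight X) ≤ lift.{u_1} (weight Y) * lift.{u_2} (weight Z) :=
          weight_le_of_isProperMap_of_injective hf hh hinj
      _ ≤ lift.{u_2} #X * lift.{u_2} #X :=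
          mul_le_mul' ((lift_le.2 hY).trans hYX) (lift_le.2 (hZ.trans (max_eq_right hX).le))
      _ = lift.{u_2} #X := by rw [← lift_mul, mul_eq_self hX]
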